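/- Let y : [0, τ) → ℝ be a non-decreasing function with y(t) > 0 for all t ∈ [0, τ), and suppose there is a constant c₂ > 0 such that y(t) ≥ c₂ ∫₀ᵗ y(s)^((n-1)/n) ds for all t ∈ [0, τ), where n ≥ 1 is a natural number. Then y(t) ≥ (c₂/n)^n · t^n for all t ∈ [0, τ). -/

import Mathlib

/-!
Put `θ = 1 - 1/n` and `F t = ∫₀ᵗ y ^ θ`. The hypothesis says `c₂ F ≤ y`, so formally
`F' = y ^ θ ≥ c₂ ^ θ F ^ θ`, i.e. `(F ^ (1/n))' ≥ c₂ ^ θ / n`; integrating from `F 0 = 0` gives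
`F t ≥ (c₂ ^ θ t / n) ^ n`, hence `y t ≥ c₂ F t ≥ (c₂ / n) ^ n t ^ n`.
As `y` is merely monotone, `F` need not be differentiable: the argument runs on right difference
quotients, those of `F` being bounded below by monotonicity of `y`, and those of `F ^ (1/n)`
through the concavity of `u ↦ u ^ (1/n)`.
-/

open MeasureTheory Set Filter Topology

theorem Real.mul_rpow_sub_one_mul_sub_le_rpow_sub_rpow {u v p : ℝ} (hv : 0 ≤ v) (hvu : v ≤ u)
    (hp0 : 0 ≤ p) (hp1 : p ≤ 1) :
    p * u ^ (p - 1) * (u - v) ≤ u ^ p - v ^ p := by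
  rcases hvu.eq_or_lt with rfl | hvu
  · simp
  have hu : 0 < u := hv.trans_lt hvu
  have := (Real.concaveOn_rpow hp0 hp1).le_slope_of_hasDerivAt hv hu.le hvu
    (Real.hasDerivAt_rpow_const (Or.inl hu.ne'))
  rwa [slope_def_field, le_div_iff₀ (sub_pos.2 hvu)] at this

theorem mul_sub_le_sub_of_forall_frequently_lt_slope {g : ℝ → ℝ} {a b k : ℝ} (hab : a ≤ b)
    (hg : ContinuousOn g (Icc a b))
    (hslope : ∀ x ∈ Ioo a b, ∀ r < k, ∃ᶠ z in 𝓝[>] x, r < slope g x z) :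
    k * (b - a) ≤ g b - g a := by
  rcases hab.eq_or_lt with rfl | hab
  · simp
  have hinner : ∀ a' ∈ Ioo a b, k * (b - a') ≤ g b - g a' := by
    intro a' ha'
    have := image_le_of_liminf_slope_right_le_deriv_boundary (f := fun x => -g x)
      (B := fun x => -g a' - k * (x - a')) (B' := fun _ => -k)
      (hg.mono (Icc_subset_Icc ha'.1.le le_rfl)).neg (by simp) (by fun_prop)
      (fun x _ => by
        simpa using ((hasDerivWithinAt_id x _).sub_const a').const_mul k |>.const_sub _)
      (fun x hx r hr => (hslope x ⟨ha'.1.trans_le hx.1, hx.2⟩ (-r) (by linarith)).mono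
        fun z hz => by rw [slope_neg]; linarith)
      (right_mem_Icc.2 ha'.2.le)
    linarith
  have hlim : Tendsto (fun a' => g b - g a' - k * (b - a')) (𝓝[Ioo a b] a)
      (𝓝 (g b - g a - k * (b - a))) :=
    ((tendsto_const_nhds.sub ((hg a (left_mem_Icc.2 hab.le)).mono Ioo_subset_Icc_self)).sub
      (tendsto_const_nhds.mul (tendsto_const_nhds.sub
        (tendsto_id.mono_left nhdsWithin_le_nhds))))
  have : (𝓝[Ioo a b] a).NeBot := left_nhdsWithin_Ioo_neBot hab
  have := ge_of_tendsto hlim <|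
    eventually_nhdsWithin_of_forall fun a' ha' => sub_nonneg.2 (hinner a' ha')
  linarith

/-- Integrated form of `F' ≥ K F ^ (1 - p) ⟹ (F ^ p)' ≥ p K`. -/
theorem mul_sub_le_rpow_sub_rpow_of_growth {F : ℝ → ℝ} {a b p K : ℝ} (hab : a ≤ b)
    (hp0 : 0 < p) (hp1 : p ≤ 1) (hK : 0 ≤ K) (hF : ContinuousOn F (Icc a b))
    (hFpos : ∀ x ∈ Ioo a b, 0 < F x)
    (hgrowth : ∀ x ∈ Ioo a b, ∀ z ∈ Ioc x b, (z - x) * (K * F x ^ (1 - p)) ≤ F z - F x) :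
    p * K * (b - a) ≤ F b ^ p - F a ^ p := by
  refine mul_sub_le_sub_of_forall_frequently_lt_slope hab
    (hF.rpow_const fun _ _ => Or.inr hp0.le) fun x hx r hr => ?_
  have hFx := hFpos x hx
  set h : ℝ → ℝ := fun z => p * F z ^ (p - 1) * (K * F x ^ (1 - p))
  have hhx : h x = p * K := by
    have : F x ^ (p - 1) * F x ^ (1 - p) = 1 := by simp [← Real.rpow_add hFx]
    linear_combination p * K * this
  have hh : Tendsto h (𝓝[>] x) (𝓝 (p * K)) := by
    rw [← hhx]
    refine ContinuousAt.continuousWithinAt ?_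
    have := (hF x (Ioo_subset_Icc_self hx)).continuousAt (Icc_mem_nhds hx.1 hx.2)
    exact ((this.rpow_const (Or.inl hFx.ne')).const_mul p).mul continuousAt_const
  have hslope : ∀ z ∈ Ioc x b, h z ≤ slope (fun t => F t ^ p) x z := by
    intro z hz
    have hxz := hgrowth x hx z hz
    have hFxz : F x ≤ F z := by
      have : 0 ≤ K * F x ^ (1 - p) := by positivity
      nlinarith [sub_pos.2 hz.1]
    rw [slope_def_field, le_div_iff₀ (sub_pos.2 hz.1)]
    calc h z * (z - x) = p * F z ^ (p - 1) * ((z - x) * (K * F x ^ (1 - p))) := by ring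
      _ ≤ p * F z ^ (p - 1) * (F z - F x) :=
        mul_le_mul_of_nonneg_left hxz (by have := hFx.trans_le hFxz; positivity)
      _ ≤ F z ^ p - F x ^ p :=
        Real.mul_rpow_sub_one_mul_sub_le_rpow_sub_rpow hFx.le hFxz hp0.le hp1
  exact ((hh.eventually (lt_mem_nhds hr)).and (Ioc_mem_nhdsGT hx.2)).frequently.mono
    fun z hz => hz.1.trans_le (hslope z hz.2)

theorem MonotoneOn.sub_mul_le_intervalIntegral {w : ℝ → ℝ} {x z : ℝ} (hxz : x ≤ z)
    (hw : MonotoneOn w (Icc x z)) : (z - x) * w x ≤ ∫ s in x..z, w s := by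
  calc (z - x) * w x = ∫ _ in x..z, w x := by simp
    _ ≤ ∫ s in x..z, w s :=
      intervalIntegral.integral_mono_on hxz intervalIntegrable_const
        (hw.mono (uIcc_of_le hxz).subset).intervalIntegrable fun s hs =>
          hw (left_mem_Icc.2 hxz) hs hs.1

theorem mul_le_integral_rpow_rpow_of_le_mul_integral {y : ℝ → ℝ} {t c p : ℝ} (ht : 0 ≤ t)
    (hc : 0 ≤ c) (hp0 : 0 < p) (hp1 : p ≤ 1) (hmono : MonotoneOn y (Icc 0 t))
    (hpos : ∀ s ∈ Icc 0 t, 0 < y s)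
    (hineq : ∀ s ∈ Icc 0 t, c * ∫ u in 0..s, y u ^ (1 - p) ≤ y s) :
    p * c ^ (1 - p) * t ≤ (∫ u in 0..t, y u ^ (1 - p)) ^ p := by
  set F : ℝ → ℝ := fun s => ∫ u in 0..s, y u ^ (1 - p)
  have hw_mono : MonotoneOn (fun u => y u ^ (1 - p)) (Icc 0 t) := fun a ha b hb hab =>
    Real.rpow_le_rpow (hpos a ha).le (hmono ha hb hab) (by linarith)
  have hw_int : ∀ x ∈ Icc 0 t, IntervalIntegrable (fun u => y u ^ (1 - p)) volume 0 x :=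
    fun x hx => (hw_mono.mono ((uIcc_of_le hx.1).trans_subset
      (Icc_subset_Icc le_rfl hx.2))).intervalIntegrable
  have hF_cont : ContinuousOn F (Icc 0 t) := by
    simpa only [uIcc_of_le ht] using intervalIntegral.continuousOn_primitive_interval'
      (hw_int t (right_mem_Icc.2 ht)) left_mem_uIcc
  have hF_pos : ∀ x ∈ Ioo 0 t, 0 < F x := fun x hx =>
    intervalIntegral.intervalIntegral_pos_of_pos_on (hw_int x ⟨hx.1.le, hx.2.le⟩)
      (fun u hu => Real.rpow_pos_of_pos (hpos u ⟨hu.1.le, hu.2.le.trans hx.2.le⟩) _) hx.1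
  have hgrowth : ∀ x ∈ Ioo 0 t, ∀ z ∈ Ioc x t,
      (z - x) * (c ^ (1 - p) * F x ^ (1 - p)) ≤ F z - F x := by
    intro x hx z hz
    have hxt : x ∈ Icc 0 t := ⟨hx.1.le, hx.2.le⟩
    calc (z - x) * (c ^ (1 - p) * F x ^ (1 - p)) = (z - x) * (c * F x) ^ (1 - p) := by
          rw [Real.mul_rpow hc (hF_pos x hx).le]
      _ ≤ (z - x) * y x ^ (1 - p) := by
          have := hF_pos x hx
          gcongr
          · linarith [hz.1]
          · exact hineq x hxt
      _ ≤ ∫ u in x..z, y u ^ (1 - p) :=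
          (hw_mono.mono (Icc_subset_Icc hx.1.le hz.2)).sub_mul_le_intervalIntegral hz.1.le
      _ = F z - F x :=
          (intervalIntegral.integral_interval_sub_left (hw_int z ⟨hx.1.le.trans hz.1.le, hz.2⟩)
            (hw_int x hxt)).symm
  simpa [F, Real.zero_rpow hp0.ne'] using
    mul_sub_le_rpow_sub_rpow_of_growth ht hp0 hp1 (by positivity) hF_cont hF_pos hgrowth

theorem stmt0_general (n : ℕ) (hn : 1 ≤ n) (τ c₂ : ℝ) (hc₂ : 0 < c₂)
    (y : ℝ → ℝ) (hmono : MonotoneOn y (Ico 0 τ))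
    (hpos : ∀ t ∈ Ico (0:ℝ) τ, 0 < y t)
    (hineq : ∀ t ∈ Ico (0:ℝ) τ,
      c₂ * ∫ s in (0:ℝ)..t, (y s) ^ (((n:ℝ) - 1) / n) ≤ y t) :
    ∀ t ∈ Ico (0:ℝ) τ, (c₂ / n) ^ n * t ^ n ≤ y t := by
  rintro t ⟨ht0, htτ⟩
  have hsub : Icc 0 t ⊆ Ico 0 τ := fun s hs => ⟨hs.1, hs.2.trans_lt htτ⟩
  have hn0 : n ≠ 0 := by omega
  have hexp : ((n:ℝ) - 1) / n = 1 - (n:ℝ)⁻¹ := by field_simp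
  simp only [hexp] at hineq
  set F := ∫ s in (0:ℝ)..t, y s ^ (1 - (n:ℝ)⁻¹)
  have hF : (n:ℝ)⁻¹ * c₂ ^ (1 - (n:ℝ)⁻¹) * t ≤ F ^ (n:ℝ)⁻¹ :=
    mul_le_integral_rpow_rpow_of_le_mul_integral ht0 hc₂.le (by positivity)
      (inv_le_one_of_one_le₀ (by exact_mod_cast hn)) (hmono.mono hsub)
      (fun s hs => hpos s (hsub hs)) fun s hs => hineq s (hsub hs)
  have hF_nonneg : 0 ≤ F := intervalIntegral.integral_nonneg ht0 fun s hs =>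
    (Real.rpow_pos_of_pos (hpos s (hsub hs)) _).le
  have hc₂_pow : c₂ * (c₂ ^ (1 - (n:ℝ)⁻¹)) ^ n = c₂ ^ n := by
    rw [Real.rpow_sub hc₂, Real.rpow_one, div_pow, Real.rpow_inv_natCast_pow hc₂.le hn0]
    field_simp
  calc (c₂ / n) ^ n * t ^ n = c₂ * ((n:ℝ)⁻¹ * c₂ ^ (1 - (n:ℝ)⁻¹) * t) ^ n := by
        linear_combination (-((n:ℝ)⁻¹ ^ n * t ^ n)) * hc₂_pow
    _ ≤ c₂ * (F ^ (n:ℝ)⁻¹) ^ n := by gcongr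
    _ = c₂ * F := by rw [Real.rpow_inv_natCast_pow hF_nonneg hn0]
    _ ≤ y t := hineq t (hsub ⟨ht0, le_rfl⟩)

/-- ODE comparison lemma: if a positive non-decreasing function `y` on `[0, τ)` satisfies
`y t ≥ c₂ ∫₀ᵗ y(s)^((n-1)/n) ds`, then `y t ≥ (c₂/n)^n t^n`. -/
theorem stmt0 (n : ℕ) (hn : 1 ≤ n) (τ c₂ : ℝ) (hτ : 0 < τ) (hc₂ : 0 < c₂)
    (y : ℝ → ℝ) (hmono : MonotoneOn y (Ico 0 τ))
    (hpos : ∀ t ∈ Ico (0:ℝ) τ, 0 < y t)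
    (hineq : ∀ t ∈ Ico (0:ℝ) τ,
      c₂ * ∫ s in (0:ℝ)..t, (y s) ^ (((n:ℝ) - 1) / n) ≤ y t) :
    ∀ t ∈ Ico (0:ℝ) τ, (c₂ / n) ^ n * t ^ n ≤ y t :=
  stmt0_general n hn τ c₂ hc₂ y hmono hpos hineq
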